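/- Let n ≥ 2 and let G(n) be the group presented by generators x_1,…,x_{3n} and relations R_orig(n). Then in G(n) the cyclic relation [x_1, x_{2n+1}, …, x_{3n}] holds, i.e. x_{3n} ⋯ x_{2n+1} x_1 = x_{3n-1} ⋯ x_{2n+1} x_1 x_{3n} = ⋯ = x_1 x_{3n} ⋯ x_{2n+1}. -/

import Mathlib

/-- The descending product `X b * X (b-1) * ⋯ * X a` (equal to `1` when `b < a`). -/
def dprod {G : Type*} [Monoid G] (X : ℕ → G) (a b : ℕ) : G :=
  (((List.range' a (b + 1 - a)).reverse).map X).prod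

/-- The set of relators expressing the cyclic system of relations
`[a₁, …, a_k]`, i.e. that all cyclic rotations of the product `a_k ⋯ a₁` are equal. -/
def cycRels {G : Type*} [Group G] (l : List G) : Set G :=
  { r | ∃ k : ℕ, r = (l.rotate k).reverse.prod * (l.reverse.prod)⁻¹ }

/-- The cyclic system of relations `[a₁, …, a_k]` holds in a group:
all cyclic rotations of the product `a_k ⋯ a₁` are equal. -/
def cycHolds {G : Type*} [Group G] (l : List G) : Prop :=
  ∀ k : ℕ, (l.rotate k).reverse.prod = l.reverse.prod

/-- The `i`-th (1-based) generator of the free group on `Fin N`. -/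
def gen (N : ℕ) (i : ℕ) : FreeGroup (Fin N) :=
  if h : 0 < N then FreeGroup.of ⟨(i - 1) % N, Nat.mod_lt _ h⟩ else 1

/-- The relation set `R_orig(n)` on the generators `x₁, …, x₃ₙ`. -/
def Rorig (n : ℕ) : Set (FreeGroup (Fin (3 * n))) :=
  let X : ℕ → FreeGroup (Fin (3 * n)) := gen (3 * n)
  (⋃ i ∈ Set.Icc 1 n, ⋃ j ∈ Set.Icc (n + 1) (2 * n - 1),
      cycRels [X i, (dprod X (n + 1) (j - 1))⁻¹ * X j * dprod X (n + 1) (j - 1)]) ∪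
  cycRels ((List.range' 1 n).map X ++
      [(dprod X (n + 1) (2 * n - 1))⁻¹ * X (2 * n) * dprod X (n + 1) (2 * n - 1)]) ∪
  cycRels ((dprod X 2 (2 * n) * X 1 * (dprod X 2 (2 * n))⁻¹) ::
      (List.range' (2 * n + 1) n).map X) ∪
  (⋃ i ∈ Set.Icc 2 n, ⋃ j ∈ Set.Icc (2 * n + 1) (3 * n),
      cycRels [dprod X (i + 1) (2 * n) * X i * (dprod X (i + 1) (2 * n))⁻¹, X j]) ∪
  (⋃ i ∈ Set.Icc (n + 1) (2 * n), ⋃ j ∈ Set.Icc (2 * n + 2) (3 * n), cycRels [X i, X j]) ∪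
  cycRels ((List.range' (n + 1) n).map X ++ [X (2 * n + 1)])

/-- The image of the `i`-th (1-based) generator `xᵢ` in the presented group
`G(n) = ⟨x₁,…,x₃ₙ ∣ R_orig(n)⟩`. -/
def genG (n : ℕ) (i : ℕ) : PresentedGroup (Rorig n) :=
  PresentedGroup.mk (Rorig n) (gen (3 * n) i)

/-!
Put `A = x₂ₙ ⋯ xₙ₊₁`, `Dᵢ = x₂ₙ ⋯ xᵢ` and `w = D₂`. Relations (5) and (6) make `A` commute
with every `xⱼ`, `2n < j ≤ 3n`. Since `Dᵢ = Dᵢ₊₁ xᵢ`, the product `w A⁻¹` telescopes into the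
conjugates `Dᵢ₊₁ xᵢ Dᵢ₊₁⁻¹` (`2 ≤ i ≤ n`), which commute with these `xⱼ` by (4); hence so does `w`.
Conjugating the cyclic relation (3), `[w x₁ w⁻¹, x₂ₙ₊₁, …, x₃ₙ]`, by `w⁻¹` gives the claim.
-/

section CycHolds

variable {G H : Type*} [Group G] [Group H]

theorem cycHolds.map {l : List G} (h : cycHolds l) (f : G →* H) : cycHolds (l.map f) := by
  intro k
  rw [← List.map_rotate, ← List.map_reverse, ← List.map_reverse, ← map_list_prod,
    ← map_list_prod, h k]

theorem cycHolds.commute_of_append_singleton {l : List G} {a : G} (h : cycHolds (l ++ [a])) :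
    Commute l.reverse.prod a := by
  have hrot := h l.length
  rw [List.rotate_append_length_eq] at hrot
  simpa [Commute, SemiconjBy] using hrot

theorem cycHolds.commute_pair {a b : G} (h : cycHolds [a, b]) : Commute a b := by
  simpa using cycHolds.commute_of_append_singleton (l := [a]) h

theorem cycHolds.of_conj_cons {w a : G} {l : List G} (hl : ∀ b ∈ l, Commute w b)
    (h : cycHolds (w * a * w⁻¹ :: l)) : cycHolds (a :: l) := by
  convert h.map (MulAut.conj w⁻¹).toMonoidHom using 1
  simp only [List.map_cons, MulEquiv.coe_toMonoidHom, MulAut.conj_apply, inv_inv]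
  congr 1
  · group
  · conv_lhs => rw [← List.map_id l]
    exact List.map_congr_left fun b hb => by
      rw [id, MulAut.conj_apply, inv_inv, mul_assoc, ← (hl b hb).eq, inv_mul_cancel_left]

end CycHolds

theorem PresentedGroup.cycHolds_map_mk {α : Type*} {rels : Set (FreeGroup α)}
    {l : List (FreeGroup α)} (h : cycRels l ⊆ rels) :
    cycHolds (l.map (PresentedGroup.mk rels)) := by
  intro k
  rw [← List.map_rotate, ← List.map_reverse, ← List.map_reverse, ← map_list_prod,
    ← map_list_prod]
  exact PresentedGroup.mk_eq_mk_of_mul_inv_mem (h ⟨k, rfl⟩)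

section Dprod

variable {M N G : Type*} [Monoid M] [Monoid N] [Group G]

theorem map_dprod (f : M →* N) (X : ℕ → M) (a b : ℕ) : f (dprod X a b) = dprod (f ∘ X) a b := by
  rw [dprod, dprod, map_list_prod, List.map_map]

theorem dprod_eq_dprod_succ_mul (X : ℕ → M) {a b : ℕ} (hab : a ≤ b) :
    dprod X a b = dprod X (a + 1) b * X a := by
  rw [dprod, dprod, show b + 1 - a = b + 1 - (a + 1) + 1 by omega, List.range'_succ,
    List.reverse_cons, List.map_append, List.prod_append]
  simp

theorem reverse_prod_map_range' (X : ℕ → M) {a m b : ℕ} (h : a + m = b + 1) :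
    ((List.range' a m).map X).reverse.prod = dprod X a b := by
  rw [dprod, show b + 1 - a = m by omega, List.map_reverse]

theorem Commute.dprod_left {X : ℕ → M} {y : M} {a b : ℕ}
    (h : ∀ i, a ≤ i → i ≤ b → Commute (X i) y) : Commute (dprod X a b) y := by
  refine Commute.list_prod_left _ _ fun z hz => ?_
  obtain ⟨i, hi, rfl⟩ := List.mem_map.mp hz
  rw [List.mem_reverse, List.mem_range'_1] at hi
  exact h i hi.1 (by omega)

/-- `dprod X a b` telescopes into the conjugates of the `X i`, `a ≤ i ≤ m`, by `dprod X (i + 1) b`,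
followed by `dprod X (m + 1) b`. -/
theorem Commute.dprod_left_of_conj {X : ℕ → G} {y : G} {a m b : ℕ} (ham : a ≤ m + 1)
    (hmb : m ≤ b) (htop : Commute (dprod X (m + 1) b) y)
    (hconj : ∀ i, a ≤ i → i ≤ m → Commute (dprod X (i + 1) b * X i * (dprod X (i + 1) b)⁻¹) y) :
    Commute (dprod X a b) y := by
  induction hd : m + 1 - a generalizing a with
  | zero => simpa [show a = m + 1 by omega] using htop
  | succ d ih =>
    have hstep : dprod X a b = (dprod X (a + 1) b * X a * (dprod X (a + 1) b)⁻¹) *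
        dprod X (a + 1) b := by
      rw [dprod_eq_dprod_succ_mul X (by omega), inv_mul_cancel_right]
    rw [hstep]
    exact (hconj a le_rfl (by omega)).mul_left
      (ih (by omega) (fun i hi hi' => hconj i (by omega) hi') (by omega))

end Dprod

section Gn

variable {n : ℕ}

theorem mk_dprod_gen (a b : ℕ) :
    PresentedGroup.mk (Rorig n) (dprod (gen (3 * n)) a b) = dprod (genG n) a b :=
  map_dprod _ _ _ _

theorem commute_genG_mid_high {i j : ℕ} (hi : i ∈ Set.Icc (n + 1) (2 * n))
    (hj : j ∈ Set.Icc (2 * n + 2) (3 * n)) : Commute (genG n i) (genG n j) := by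
  have h : cycRels [gen (3 * n) i, gen (3 * n) j] ⊆ Rorig n := fun _ hr =>
    Or.inl <| Or.inr <| Set.mem_biUnion hi <| Set.mem_biUnion hj hr
  exact (PresentedGroup.cycHolds_map_mk h).commute_pair

theorem commute_dprod_mid_genG : Commute (dprod (genG n) (n + 1) (2 * n)) (genG n (2 * n + 1)) := by
  have h : cycRels ((List.range' (n + 1) n).map (gen (3 * n)) ++ [gen (3 * n) (2 * n + 1)]) ⊆
      Rorig n := fun _ hr => Or.inr hr
  have hcyc := PresentedGroup.cycHolds_map_mk h
  rw [List.map_append, List.map_map, List.map_singleton] at hcyc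
  have hcomm := hcyc.commute_of_append_singleton
  rwa [reverse_prod_map_range' _ (by omega : n + 1 + n = 2 * n + 1)] at hcomm

theorem commute_conj_genG_low_high {i j : ℕ} (hi : i ∈ Set.Icc 2 n)
    (hj : j ∈ Set.Icc (2 * n + 1) (3 * n)) :
    Commute (dprod (genG n) (i + 1) (2 * n) * genG n i * (dprod (genG n) (i + 1) (2 * n))⁻¹)
      (genG n j) := by
  have h : cycRels [dprod (gen (3 * n)) (i + 1) (2 * n) * gen (3 * n) i *
      (dprod (gen (3 * n)) (i + 1) (2 * n))⁻¹, gen (3 * n) j] ⊆ Rorig n := fun _ hr =>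
    Or.inl <| Or.inl <| Or.inr <| Set.mem_biUnion hi <| Set.mem_biUnion hj hr
  have hcyc := PresentedGroup.cycHolds_map_mk h
  simp only [List.map_cons, List.map_nil, map_mul, map_inv, mk_dprod_gen] at hcyc
  exact hcyc.commute_pair

theorem cycHolds_conj_genG_one_high :
    cycHolds ((dprod (genG n) 2 (2 * n) * genG n 1 * (dprod (genG n) 2 (2 * n))⁻¹) ::
      (List.range' (2 * n + 1) n).map (genG n)) := by
  have h : cycRels ((dprod (gen (3 * n)) 2 (2 * n) * gen (3 * n) 1 *
      (dprod (gen (3 * n)) 2 (2 * n))⁻¹) :: (List.range' (2 * n + 1) n).map (gen (3 * n))) ⊆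
      Rorig n := fun _ hr => Or.inl <| Or.inl <| Or.inl <| Or.inr hr
  have hcyc := PresentedGroup.cycHolds_map_mk h
  simp only [List.map_cons, List.map_map, map_mul, map_inv, mk_dprod_gen] at hcyc
  exact hcyc

theorem commute_dprod_mid_genG_high {j : ℕ} (hj : j ∈ Set.Icc (2 * n + 1) (3 * n)) :
    Commute (dprod (genG n) (n + 1) (2 * n)) (genG n j) := by
  obtain rfl | hj' := eq_or_lt_of_le hj.1
  · exact commute_dprod_mid_genG
  · exact Commute.dprod_left fun i hi hi' => commute_genG_mid_high ⟨hi, hi'⟩ ⟨hj', hj.2⟩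

theorem commute_dprod_two_genG_high {j : ℕ} (hj : j ∈ Set.Icc (2 * n + 1) (3 * n)) :
    Commute (dprod (genG n) 2 (2 * n)) (genG n j) := by
  have hn : 1 ≤ n := by have := hj.1.trans hj.2; omega
  exact Commute.dprod_left_of_conj (m := n) (by omega) (by omega)
    (commute_dprod_mid_genG_high hj) fun i hi hi' => commute_conj_genG_low_high ⟨hi, hi'⟩ hj

end Gn

theorem cyclic_relation_in_Gn'_general (n : ℕ) :
    cycHolds (genG n 1 :: (List.range' (2 * n + 1) n).map (genG n)) := by
  refine cycHolds_conj_genG_one_high.of_conj_cons fun b hb => ?_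
  obtain ⟨j, hj, rfl⟩ := List.mem_map.mp hb
  rw [List.mem_range'_1] at hj
  exact commute_dprod_two_genG_high ⟨hj.1, by omega⟩

/-- In `G(n) = ⟨x₁,…,x₃ₙ ∣ R_orig(n)⟩` the cyclic relation `[x₁, x₂ₙ₊₁, …, x₃ₙ]` holds:
`x₃ₙ ⋯ x₂ₙ₊₁ x₁ = x₃ₙ₋₁ ⋯ x₂ₙ₊₁ x₁ x₃ₙ = ⋯ = x₁ x₃ₙ ⋯ x₂ₙ₊₁`. -/
theorem cyclic_relation_in_Gn' (n : ℕ) (hn : 2 ≤ n) :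
    cycHolds (genG n 1 :: (List.range' (2 * n + 1) n).map (genG n)) :=
  cyclic_relation_in_Gn'_general n
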